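/- In a cat¹-group (e; s, t : R → S), the kernels ker s and ker t are normal subgroups of R, and the map ker s → S, k ↦ t(k), together with the action of S on ker s given by x ▷ k = e(x) k e(x)⁻¹, is a crossed module of groups. -/
import Mathlib


theorem cat1_group_gives_crossed_module
    {R S : Type*} [Group R] [Group S]
    (s t : R →* S) (e : S →* R)
    (hse : ∀ x : S, s (e x) = x) (hte : ∀ x : S, t (e x) = x)
    (hker : ∀ x y : R, s x = 1 → t y = 1 → Commute x y) :
    -- ker s and ker t are normal subgroups of R
    s.ker.Normal ∧ t.ker.Normal ∧
    -- the action x ▷ k = e(x) k e(x)⁻¹ preserves ker s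
    (∀ (x : S) (k : R), k ∈ s.ker → e x * k * (e x)⁻¹ ∈ s.ker) ∧
    -- XM1 for the boundary k ↦ t(k) on ker s
    (∀ (x : S) (k : R), k ∈ s.ker → t (e x * k * (e x)⁻¹) = x * t k * x⁻¹) ∧
    -- XM2 (Peiffer identity)
    (∀ k k' : R, k ∈ s.ker → k' ∈ s.ker →
      e (t k) * k' * (e (t k))⁻¹ = k * k' * k⁻¹) := by
  refine ⟨s.normal_ker, t.normal_ker, ?_, ?_, ?_⟩
  · intro x k hk
    simp [MonoidHom.mem_ker, hse, MonoidHom.mem_ker.mp hk]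
  · intro x k hk
    simp [hte]
  · intro k k' hk hk'
    have h1 : t ((e (t k))⁻¹ * k) = 1 := by simp [hte]
    have hc : Commute k' ((e (t k))⁻¹ * k) :=
      hker _ _ (MonoidHom.mem_ker.mp hk') h1
    have := hc.eq
    -- k' * (e(tk)⁻¹ * k) = (e(tk)⁻¹ * k) * k'
    calc e (t k) * k' * (e (t k))⁻¹
        = e (t k) * (k' * ((e (t k))⁻¹ * k)) * k⁻¹ := by group
      _ = e (t k) * ((e (t k))⁻¹ * k * k') * k⁻¹ := by rw [this]
      _ = k * k' * k⁻¹ := by group
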